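/- arXiv:2404.04457 — 3 statements merged into one kernel-verified Lean document; each statement's English description precedes it below -/
import Mathlib

section
/- Let C be a symmetric monoidal category which is preadditive and monoidal preadditive (the tensor product of morphisms is additive in each variable, so tensoring with a zero morphism gives a zero morphism), let M be an object of C admitting a dual object Mᘁ, and let f : M ⟶ N be a morphism. Let f̂ : 𝟙 ⟶ Mᘁ ⊗ N denote the mate of f, i.e. the morphism corresponding to f under the duality bijection Hom(M, N) ≅ Hom(𝟙, Mᘁ ⊗ N). Then there exists n ≥ 1 with f^{⊗n} = 0 if and only if there exists n ≥ 1 with f̂^{⊗n} = 0. -/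
open CategoryTheory MonoidalCategory

/-- The `n`-fold tensor power of an object: `M^{⊗0} = 𝟙_C`, `M^{⊗(n+1)} = M^{⊗n} ⊗ M`. -/
def tensorPowObj {C : Type*} [Category C] [MonoidalCategory C] (M : C) : ℕ → C
  | 0 => 𝟙_ C
  | n + 1 => tensorPowObj M n ⊗ M

/-- The `n`-fold tensor power `f^{⊗n} : M^{⊗n} ⟶ N^{⊗n}` of a morphism `f : M ⟶ N`. -/
def tensorPowHom {C : Type*} [Category C] [MonoidalCategory C] {M N : C} (f : M ⟶ N) :
    ∀ n : ℕ, tensorPowObj M n ⟶ tensorPowObj N n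
  | 0 => 𝟙 (𝟙_ C)
  | n + 1 => tensorPowHom f n ⊗ₘ f

/-!
The mate `f̂` is `f` whiskered by `ᘁM` and precomposed with the coevaluation, and conversely
`f` is recovered from `M ◁ f̂` by composing with the evaluation (the zig-zag identity). So each
of `f`, `f̂` has the form `a ≫ U ◁ g ≫ b` with `g` the other one, and it suffices that
`g^{⊗n} = 0` forces `(a ≫ U ◁ g ≫ b)^{⊗n} = 0`. This follows from functoriality of tensor
powers and, via the braiding, `(p ⊗ q)^{⊗n} ≅ p^{⊗n} ⊗ q^{⊗n}`, which vanishes with `q^{⊗n}`.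
-/

namespace CategoryTheory

variable {C : Type*} [Category C] [MonoidalCategory C]

lemma tensorPowHom_comp {X Y Z : C} (f : X ⟶ Y) (g : Y ⟶ Z) (n : ℕ) :
    tensorPowHom (f ≫ g) n = tensorPowHom f n ≫ tensorPowHom g n := by
  induction n with
  | zero => exact (Category.comp_id _).symm
  | succ n ih =>
    simp only [tensorPowHom, ih]
    exact (tensorHom_comp_tensorHom _ _ _ _).symm

variable [BraidedCategory C]

def tensorPowTensorIso (U X : C) :
    ∀ n : ℕ, tensorPowObj (U ⊗ X) n ≅ tensorPowObj U n ⊗ tensorPowObj X n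
  | 0 => (λ_ (𝟙_ C)).symm
  | n + 1 => whiskerRightIso (tensorPowTensorIso U X n) (U ⊗ X) ≪≫
      Functor.Monoidal.μIso (tensor C) (tensorPowObj U n, tensorPowObj X n) (U, X)

lemma tensorPowHom_tensorHom_comp_tensorPowTensorIso_hom {U U' X X' : C} (p : U ⟶ U')
    (q : X ⟶ X') (n : ℕ) :
    tensorPowHom (p ⊗ₘ q) n ≫ (tensorPowTensorIso U' X' n).hom =
      (tensorPowTensorIso U X n).hom ≫ (tensorPowHom p n ⊗ₘ tensorPowHom q n) := by
  induction n with
  | zero => simp [tensorPowHom, tensorPowTensorIso, tensorPowObj]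
  | succ n ih =>
    change (tensorPowHom (p ⊗ₘ q) n ⊗ₘ (p ⊗ₘ q)) ≫
        (tensorPowTensorIso U' X' n).hom ▷ (U' ⊗ X') ≫ tensorμ _ _ U' X' =
      ((tensorPowTensorIso U X n).hom ▷ (U ⊗ X) ≫ tensorμ _ _ U X) ≫
        ((tensorPowHom p n ⊗ₘ p) ⊗ₘ (tensorPowHom q n ⊗ₘ q))
    rw [tensorHom_comp_whiskerRight_assoc, ih, ← whiskerRight_comp_tensorHom, Category.assoc,
      Category.assoc, tensorμ_natural]

variable [Preadditive C] [MonoidalPreadditive C]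

lemma tensorPowHom_tensorHom_eq_zero {U U' X X' : C} (p : U ⟶ U') {q : X ⟶ X'} {n : ℕ}
    (hq : tensorPowHom q n = 0) : tensorPowHom (p ⊗ₘ q) n = 0 := by
  rw [← cancel_mono (tensorPowTensorIso U' X' n).hom,
    tensorPowHom_tensorHom_comp_tensorPowTensorIso_hom, hq, MonoidalPreadditive.tensor_zero,
    Limits.comp_zero, Limits.zero_comp]

lemma tensorPowHom_comp_whiskerLeft_comp_eq_zero {X Y Z W U : C} (a : X ⟶ U ⊗ Y) {g : Y ⟶ Z}
    (b : U ⊗ Z ⟶ W) {n : ℕ} (hg : tensorPowHom g n = 0) :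
    tensorPowHom (a ≫ U ◁ g ≫ b) n = 0 := by
  rw [tensorPowHom_comp, tensorPowHom_comp, ← id_tensorHom, tensorPowHom_tensorHom_eq_zero _ hg,
    Limits.zero_comp, Limits.comp_zero]

end CategoryTheory

/-- Let `C` be a symmetric monoidal category which is preadditive and monoidal preadditive,
let `M` be an object admitting a dual `ᘁM` (with coevaluation `η : 𝟙_C ⟶ ᘁM ⊗ M`),
and let `f : M ⟶ N`.  Write `f̂ := η ≫ (ᘁM ◁ f) : 𝟙_C ⟶ ᘁM ⊗ N` for the mate of `f`
under the duality bijection `Hom(M, N) ≅ Hom(𝟙, ᘁM ⊗ N)`.  Then `f` is tensor nilpotent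
iff `f̂` is tensor nilpotent. -/
theorem tensorNilpotent_iff_mate_tensorNilpotent
    {C : Type*} [Category C] [MonoidalCategory C] [Preadditive C]
    [MonoidalPreadditive C] [SymmetricCategory C]
    {M N : C} [HasLeftDual M] (f : M ⟶ N) :
    (∃ n : ℕ, 1 ≤ n ∧ tensorPowHom f n = 0) ↔
      (∃ n : ℕ, 1 ≤ n ∧ tensorPowHom (η_ (ᘁM) M ≫ ((ᘁM) ◁ f)) n = 0) := by
  have f_eq : f = (ρ_ M).inv ≫ M ◁ (η_ (ᘁM) M ≫ (ᘁM) ◁ f) ≫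
      (α_ _ _ _).inv ≫ ε_ (ᘁM) M ▷ N ≫ (λ_ N).hom := by
    conv_lhs => rw [← Iso.inv_hom_id_assoc (ρ_ M) f,
      ← tensorLeftHomEquiv_symm_coevaluation_comp_whiskerLeft (Y := ᘁM)]
    rfl
  constructor
  · rintro ⟨n, hn, hf⟩
    refine ⟨n, hn, ?_⟩
    simpa using tensorPowHom_comp_whiskerLeft_comp_eq_zero (η_ (ᘁM) M) (𝟙 _) hf
  · rintro ⟨n, hn, hf⟩
    refine ⟨n, hn, ?_⟩
    rw [f_eq]
    exact tensorPowHom_comp_whiskerLeft_comp_eq_zero _ _ hf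
end

section
/- Let T be a pretriangulated category admitting countable coproducts, and let X₁ →^{α₁} X₂ →^{α₂} X₃ →^{α₃} ⋯ be a sequence of objects and morphisms indexed by the natural numbers such that for every i there exists k ≥ i with the composite α_k ∘ ⋯ ∘ α_{i+1} ∘ α_i : X_i → X_{k+1} equal to zero. Let 1 − f : ⊕ᵢ Xᵢ → ⊕ᵢ Xᵢ be the morphism whose component on the i-th summand is ι_i − (α_i ≫ ι_{i+1}), where ι_j denotes the j-th coproduct inclusion. Then in any distinguished triangle ⊕ᵢ Xᵢ →^{1−f} ⊕ᵢ Xᵢ → Y → Σ(⊕ᵢ Xᵢ), the object Y is a zero object; that is, the homotopy colimit hocolim(Xᵢ) of the sequence is isomorphic to 0. -/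
open CategoryTheory CategoryTheory.Limits CategoryTheory.Pretriangulated

/-- The composite `X i ⟶ X (i + k)` of the morphisms `α i, α (i+1), …, α (i+k-1)` of a
sequence `X₁ → X₂ → ⋯` (the empty composite being the identity). -/
def chainComp {A : Type*} [Category A] (X : ℕ → A) (α : ∀ i : ℕ, X i ⟶ X (i + 1)) :
    ∀ i k : ℕ, X i ⟶ X (i + k)
  | _, 0 => 𝟙 _
  | i, k + 1 => chainComp X α i k ≫ α (i + k)

lemma eqToHom_comp_alpha {A : Type*} [Category A] (X : ℕ → A)
    (α : ∀ i : ℕ, X i ⟶ X (i + 1)) {m n : ℕ} (h : m = n) :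
    eqToHom (congrArg X h) ≫ α n = α m ≫ eqToHom (congrArg X (by rw [h])) := by
  subst h; simp

lemma chainComp_left {A : Type*} [Category A] (X : ℕ → A)
    (α : ∀ i : ℕ, X i ⟶ X (i + 1)) (i : ℕ) :
    ∀ k : ℕ, α i ≫ chainComp X α (i + 1) k =
      chainComp X α i (k + 1) ≫ eqToHom (congrArg X (by omega))
  | 0 => by simp [chainComp]
  | k + 1 => by
    rw [show chainComp X α (i + 1) (k + 1)
        = chainComp X α (i + 1) k ≫ α ((i + 1) + k) from rfl,
      ← Category.assoc, chainComp_left X α i k, Category.assoc,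
      eqToHom_comp_alpha X α (show i + (k + 1) = (i + 1) + k by omega)]
    rw [show chainComp X α i (k + 1 + 1)
        = chainComp X α i (k + 1) ≫ α (i + (k + 1)) from rfl]
    simp

lemma eqToHom_comp_sigmaι {T : Type*} [Category T] (X : ℕ → T) [HasCoproduct X]
    {m n : ℕ} (h : m = n) :
    eqToHom (congrArg X h) ≫ Sigma.ι X n = Sigma.ι X m := by
  subst h; simp

/-- Let `T` be a pretriangulated category with countable coproducts and let
`X₁ →^{α₁} X₂ →^{α₂} ⋯` be a sequence such that for every `i` some composite
`α_{i+k} ∘ ⋯ ∘ αᵢ : Xᵢ ⟶ X_{i+k+1}` vanishes.  Let `1 - f : ⊕ᵢ Xᵢ ⟶ ⊕ᵢ Xᵢ` be the map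
whose component on the `i`-th summand is `ιᵢ - (αᵢ ≫ ιᵢ₊₁)`.  Then in any distinguished
triangle `⊕ᵢ Xᵢ →^{1-f} ⊕ᵢ Xᵢ → Y → Σ(⊕ᵢ Xᵢ)` the object `Y` (the homotopy colimit
`hocolim Xᵢ`) is a zero object. -/
theorem isZero_hocolim_of_eventually_vanishing
    {T : Type*} [Category T] [HasZeroObject T] [HasShift T ℤ] [Preadditive T]
    [∀ n : ℤ, Functor.Additive (shiftFunctor T n)] [Pretriangulated T]
    [HasCountableCoproducts T]
    (X : ℕ → T) (α : ∀ i : ℕ, X i ⟶ X (i + 1))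
    (hvan : ∀ i : ℕ, ∃ k : ℕ, chainComp X α i (k + 1) = 0)
    (Y : T) (g : (∐ X) ⟶ Y) (h : Y ⟶ (∐ X)⟦(1 : ℤ)⟧)
    (hT : Triangle.mk (Sigma.desc (fun i : ℕ => Sigma.ι X i - (α i ≫ Sigma.ι X (i + 1)))) g h
      ∈ distTriang T) :
    IsZero Y := by
  set u : (∐ X) ⟶ (∐ X) :=
    Sigma.desc (fun i : ℕ => Sigma.ι X i - (α i ≫ Sigma.ι X (i + 1))) with hu
  choose K hK using hvan
  -- vanishing propagates forward
  have hzero : ∀ i j : ℕ, K i + 1 ≤ j → chainComp X α i j = 0 := by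
    intro i j hj
    obtain ⟨d, rfl⟩ : ∃ d, j = (K i + 1) + d := ⟨j - (K i + 1), by omega⟩
    induction d with
    | zero => exact hK i
    | succ d ih =>
      rw [show (K i + 1) + (d + 1) = ((K i + 1) + d) + 1 from rfl,
        show chainComp X α i (((K i + 1) + d) + 1)
          = chainComp X α i ((K i + 1) + d) ≫ α (i + ((K i + 1) + d)) from rfl,
        ih (by omega), zero_comp]
  -- the candidate inverse
  set S : ∀ i : ℕ, X i ⟶ ∐ X :=
    fun i => ∑ j ∈ Finset.range (K i + 1), chainComp X α i j ≫ Sigma.ι X (i + j) with hS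
  set v : (∐ X) ⟶ (∐ X) := Sigma.desc S with hv
  -- stabilization of the partial sums
  have hstab : ∀ i m : ℕ, K i + 1 ≤ m →
      S i = ∑ j ∈ Finset.range m, chainComp X α i j ≫ Sigma.ι X (i + j) := by
    intro i m hm
    rw [hS]
    refine Finset.sum_subset (by intro x hx; simp at hx ⊢; omega) ?_
    intro x hx hx'
    simp only [Finset.mem_range] at hx hx'
    rw [hzero i x (by omega), zero_comp]
  have huv : u ≫ v = 𝟙 _ := by
    refine Sigma.hom_ext _ _ (fun i => ?_)
    rw [← Category.assoc, hu, Sigma.ι_desc, Category.comp_id, Preadditive.sub_comp,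
      Category.assoc, hv, Sigma.ι_desc, Sigma.ι_desc]
    set M := max (K i) (K (i + 1) + 1) + 1 with hM
    have h1 : S i = ∑ j ∈ Finset.range M, chainComp X α i j ≫ Sigma.ι X (i + j) :=
      hstab i M (by omega)
    have h2 : α i ≫ S (i + 1)
        = ∑ j ∈ Finset.range M, chainComp X α i (j + 1) ≫ Sigma.ι X (i + (j + 1)) := by
      have e : ∀ j : ℕ, α i ≫ (chainComp X α (i + 1) j ≫ Sigma.ι X ((i + 1) + j))
          = chainComp X α i (j + 1) ≫ Sigma.ι X (i + (j + 1)) := by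
        intro j
        rw [← Category.assoc, chainComp_left X α i j, Category.assoc,
          eqToHom_comp_sigmaι X (show i + (j + 1) = (i + 1) + j by omega)]
      rw [hstab (i + 1) M (by omega), Preadditive.comp_sum]
      exact Finset.sum_congr rfl (fun j _ => e j)
    rw [h1, h2]
    have h3 : ∑ j ∈ Finset.range (M + 1), chainComp X α i j ≫ Sigma.ι X (i + j)
        = (∑ j ∈ Finset.range M, chainComp X α i (j + 1) ≫ Sigma.ι X (i + (j + 1)))
          + chainComp X α i 0 ≫ Sigma.ι X (i + 0) := Finset.sum_range_succ' _ _
    have h4 : ∑ j ∈ Finset.range (M + 1), chainComp X α i j ≫ Sigma.ι X (i + j)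
        = ∑ j ∈ Finset.range M, chainComp X α i j ≫ Sigma.ι X (i + j) := by
      rw [Finset.sum_range_succ, hzero i M (by omega), zero_comp, add_zero]
    have h5 : chainComp X α i 0 ≫ Sigma.ι X (i + 0) = Sigma.ι X i := by
      simp [chainComp]
    rw [← h4, h3, h5]
    abel
  have hvu : v ≫ u = 𝟙 _ := by
    refine Sigma.hom_ext _ _ (fun i => ?_)
    rw [← Category.assoc, hv, Sigma.ι_desc, Category.comp_id, hS]
    simp only [Preadditive.sum_comp, Category.assoc]
    have e : ∀ j : ℕ, chainComp X α i j ≫ (Sigma.ι X (i + j) ≫ u)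
        = chainComp X α i j ≫ Sigma.ι X (i + j)
          - chainComp X α i (j + 1) ≫ Sigma.ι X (i + (j + 1)) := by
      intro j
      rw [hu, Sigma.ι_desc, Preadditive.comp_sub,
        show chainComp X α i (j + 1) = chainComp X α i j ≫ α (i + j) from rfl]
      rw [Category.assoc]
      exact rfl
    calc ∑ j ∈ Finset.range (K i + 1), chainComp X α i j ≫ (Sigma.ι X (i + j) ≫ u)
        = ∑ j ∈ Finset.range (K i + 1),
            (chainComp X α i j ≫ Sigma.ι X (i + j)
              - chainComp X α i (j + 1) ≫ Sigma.ι X (i + (j + 1))) :=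
          Finset.sum_congr rfl (fun j _ => e j)
      _ = chainComp X α i 0 ≫ Sigma.ι X (i + 0)
            - chainComp X α i (K i + 1) ≫ Sigma.ι X (i + (K i + 1)) :=
          Finset.sum_range_sub' (fun j => chainComp X α i j ≫ Sigma.ι X (i + j)) _
      _ = Sigma.ι X i := by rw [hK i, zero_comp, sub_zero]; simp [chainComp]
  have : IsIso u := ⟨v, huv, hvu⟩
  exact Triangle.isZero₃_of_isIso₁ _ hT this
end

section
/- Let A be an additive category admitting countable coproducts, and let (Xᵢ)_{i∈ℕ} be a sequence of objects with morphisms αᵢ : Xᵢ → Xᵢ₊₁ such that for every i there exists k ≥ i with the composite α_k ∘ ⋯ ∘ α_{i+1} ∘ α_i : X_i → X_{k+1} equal to zero. Then the endomorphism 1 − f of the coproduct ⊕ᵢ Xᵢ, whose component on the i-th summand is ι_i − (α_i ≫ ι_{i+1}) (where ι_j is the j-th coproduct inclusion), is an isomorphism. -/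
open CategoryTheory CategoryTheory.Limits

section Aux
variable {A : Type*} [Category A] (X : ℕ → A) (α : ∀ i : ℕ, X i ⟶ X (i + 1))

lemma chainComp_succ_comp {Z : A} (i : ℕ) :
    ∀ (j : ℕ) (φ : ∀ n, X n ⟶ Z),
      chainComp X α i (j + 1) ≫ φ (i + (j + 1)) =
        α i ≫ chainComp X α (i + 1) j ≫ φ (i + 1 + j)
  | 0, φ => by simp [chainComp]
  | j + 1, φ => by
    have IH := chainComp_succ_comp i j (fun n => α n ≫ φ (n + 1))
    simp only [chainComp, Category.assoc] at IH ⊢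
    exact IH

variable [Preadditive A]

lemma chainComp_zero_of_le (i k : ℕ) (h : chainComp X α i k = 0) :
    ∀ m, k ≤ m → chainComp X α i m = 0 := by
  intro m hm
  induction m, hm using Nat.le_induction with
  | base => exact h
  | succ m hm ih => simp [chainComp, ih]

end Aux

/-- Let `A` be an additive category with countable coproducts, and let `(Xᵢ)` be a sequence
of objects with maps `αᵢ : Xᵢ ⟶ Xᵢ₊₁` such that for every `i` some composite
`α_{i+k} ∘ ⋯ ∘ α_{i+1} ∘ αᵢ : Xᵢ ⟶ X_{i+k+1}` vanishes.  Then the endomorphism `1 - f` of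
`⊕ᵢ Xᵢ` whose component on the `i`-th summand is `ιᵢ - (αᵢ ≫ ιᵢ₊₁)` is an isomorphism. -/
theorem isIso_one_sub_f_of_eventually_vanishing
    {A : Type*} [Category A] [Preadditive A] [HasCountableCoproducts A]
    (X : ℕ → A) (α : ∀ i : ℕ, X i ⟶ X (i + 1))
    (hvan : ∀ i : ℕ, ∃ k : ℕ, chainComp X α i (k + 1) = 0) :
    IsIso (Sigma.desc (fun i : ℕ => Sigma.ι X i - (α i ≫ Sigma.ι X (i + 1)))) := by
  classical
  set h : (∐ X) ⟶ (∐ X) :=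
    Sigma.desc (fun i : ℕ => Sigma.ι X i - (α i ≫ Sigma.ι X (i + 1))) with hh
  set K : ℕ → ℕ := fun i => (hvan i).choose + 1 with hK
  have hKzero : ∀ i m, K i ≤ m → chainComp X α i m = 0 := fun i m hm =>
    chainComp_zero_of_le X α i (K i) (hvan i).choose_spec m hm
  have hstable : ∀ i M, K i ≤ M →
      (∑ j ∈ Finset.range M, chainComp X α i j ≫ Sigma.ι X (i + j)) =
      ∑ j ∈ Finset.range (K i), chainComp X α i j ≫ Sigma.ι X (i + j) := by
    intro i M hM
    induction M, hM using Nat.le_induction with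
    | base => rfl
    | succ M hM ih =>
      rw [Finset.sum_range_succ, hKzero i M hM, Limits.zero_comp, add_zero, ih]
  set g : (∐ X) ⟶ (∐ X) :=
    Sigma.desc (fun i => ∑ j ∈ Finset.range (K i),
      chainComp X α i j ≫ Sigma.ι X (i + j)) with hg
  have h1 : h ≫ g = 𝟙 _ := by
    ext i
    set M : ℕ := max (K i) (K (i + 1)) with hM
    rw [Category.comp_id, hh, colimit.ι_desc_assoc]
    simp only [Cofan.mk_ι_app, Preadditive.sub_comp, Category.assoc, hg, colimit.ι_desc]
    rw [← hstable i (M + 1) (le_trans (le_max_left _ _) (Nat.le_succ M)),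
        ← hstable (i + 1) M (le_max_right _ _)]
    rw [Finset.sum_range_succ']
    have : (α i ≫ ∑ j ∈ Finset.range M, chainComp X α (i + 1) j ≫ Sigma.ι X (i + 1 + j)) =
        ∑ j ∈ Finset.range M, chainComp X α i (j + 1) ≫ Sigma.ι X (i + (j + 1)) := by
      rw [Preadditive.comp_sum]
      exact Finset.sum_congr rfl fun j _ =>
        (chainComp_succ_comp X α i j (Sigma.ι X)).symm
    rw [this]
    simp [chainComp]
  have h2 : g ≫ h = 𝟙 _ := by
    ext i
    rw [Category.comp_id, hg, colimit.ι_desc_assoc]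
    simp only [Cofan.mk_ι_app]
    rw [Preadditive.sum_comp]
    have : ∀ j, (chainComp X α i j ≫ Sigma.ι X (i + j)) ≫ h =
        (chainComp X α i j ≫ Sigma.ι X (i + j)) -
          (chainComp X α i (j + 1) ≫ Sigma.ι X (i + (j + 1))) := by
      intro j
      rw [hh, Category.assoc, colimit.ι_desc]
      simp [chainComp, Preadditive.comp_sub]
      rfl
    simp only [this]
    rw [Finset.sum_range_sub' (fun j => chainComp X α i j ≫ Sigma.ι X (i + j))]
    rw [hKzero i (K i) le_rfl]
    simp [chainComp]
  exact ⟨g, h1, h2⟩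
end
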